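/- Let A be definite and visualized, and let N₁,...,N_m be the node sets of the strongly connected components of the critical digraph extended with all loops, C*(A). Then for i ∈ N_μ, j ∈ N_ν, the Kleene star entry satisfies a*_ij = α*_{μν}, where α*_{μν} is the (μ,ν)-entry of the Kleene star of the m×m matrix A^C with entries α_{μν} = max{a_ij : i ∈ N_μ, j ∈ N_ν}. In particular each (μ,ν)-block of A* is constant. -/

import Mathlib

open Finset

/-- Max-times matrix product: `(A ⊗ B) i j = max_k (A i k * B k j)`. -/
noncomputable def mProd {n : ℕ} (A B : Matrix (Fin n) (Fin n) NNReal) :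
    Matrix (Fin n) (Fin n) NNReal :=
  fun i j => univ.sup fun k => A i k * B k j

/-- Max-algebraic matrix powers, `mPow A 0 = I`. -/
noncomputable def mPow {n : ℕ} (A : Matrix (Fin n) (Fin n) NNReal) :
    ℕ → Matrix (Fin n) (Fin n) NNReal
  | 0 => fun i j => if i = j then 1 else 0
  | k + 1 => mProd (mPow A k) A

/-- Kleene star `A* = I ⊕ A ⊕ ... ⊕ A^{n-1}` in max algebra. -/
noncomputable def klStar {n : ℕ} (A : Matrix (Fin n) (Fin n) NNReal) :
    Matrix (Fin n) (Fin n) NNReal :=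
  fun i j => (Finset.range n).sup fun k => mPow A k i j

/-- Partial "sums" `I ⊕ A ⊕ ... ⊕ A^m` of the Kleene star series. -/
noncomputable def kPartial {n : ℕ} (A : Matrix (Fin n) (Fin n) NNReal) (m : ℕ) :
    Matrix (Fin n) (Fin n) NNReal :=
  fun i j => (Finset.range (m + 1)).sup fun k => mPow A k i j

/-- The weight of the cycle given by the list `l` (with wrap-around edge). -/
def cycleWeight {n : ℕ} (A : Matrix (Fin n) (Fin n) NNReal) (l : List (Fin n)) : NNReal :=
  ((l.zip (l.rotate 1)).map fun p => A p.1 p.2).prod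

/-- The geometric mean of a cycle: `w(σ,A)^{1/k}`. -/
noncomputable def cycleMean {n : ℕ} (A : Matrix (Fin n) (Fin n) NNReal) (l : List (Fin n)) :
    NNReal :=
  (cycleWeight A l) ^ ((l.length : ℝ)⁻¹)

/-- The maximum cycle geometric mean `λ(A)`. -/
noncomputable def maxCycleMean {n : ℕ} (A : Matrix (Fin n) (Fin n) NNReal) : NNReal :=
  sSup {x | ∃ l : List (Fin n), l ≠ [] ∧ x = cycleMean A l}

/-- `(i,j)` is a critical edge: it lies on a cycle attaining `λ(A)`. -/
def criticalEdge {n : ℕ} (A : Matrix (Fin n) (Fin n) NNReal) (i j : Fin n) : Prop :=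
  ∃ l : List (Fin n), l ≠ [] ∧ cycleMean A l = maxCycleMean A ∧ (i, j) ∈ l.zip (l.rotate 1)

/-- Max-algebraic matrix-vector product. -/
noncomputable def mVec {n : ℕ} (A : Matrix (Fin n) (Fin n) NNReal) (x : Fin n → NNReal) :
    Fin n → NNReal :=
  fun i => univ.sup fun j => A i j * x j

/-!
Since every entry of `A` is at most `1`, removing a cycle from a walk never decreases its
weight, so every max-algebraic power `A^k` is dominated by `A*` and `A*` is transitive:
`a*_ip a*_pj ≤ a*_ij`. Inside a component of `C*(A)` any two nodes are joined by a critical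
path of weight `1`, so `a*_ij ≥ 1` there. Hence a walk in `A^C`, each of whose edges is
realised by a maximising edge of `A`, lifts to `A` through critical paths, giving
`α*_{f i, f j} ≤ a*_ij`; conversely every walk in `A` projects to a walk in `A^C` of at least
the same weight.
-/

section Powers

variable {n m : ℕ}

lemma mPow_zero_apply (B : Matrix (Fin n) (Fin n) NNReal) (i j : Fin n) :
    mPow B 0 i j = if i = j then 1 else 0 := rfl

lemma mPow_succ_apply (B : Matrix (Fin n) (Fin n) NNReal) (k : ℕ) (i j : Fin n) :
    mPow B (k + 1) i j = univ.sup fun p => mPow B k i p * B p j := rfl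

lemma mPow_mul_mPow_le (B : Matrix (Fin n) (Fin n) NNReal) (a b : ℕ) (i p j : Fin n) :
    mPow B a i p * mPow B b p j ≤ mPow B (a + b) i j := by
  induction b generalizing j with
  | zero =>
    rw [mPow_zero_apply]
    split_ifs with h
    · rw [h, mul_one, add_zero]
    · rw [mul_zero]; exact zero_le
  | succ b ih =>
    rw [mPow_succ_apply, NNReal.mul_finset_sup, ← add_assoc, mPow_succ_apply]
    refine Finset.sup_le fun q hq => ?_
    rw [← mul_assoc]
    exact (mul_le_mul_left (ih q) _).trans (le_sup (f := fun q => mPow B (a + b) i q * B q j) hq)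

lemma mPow_le_mPow_comp {A : Matrix (Fin n) (Fin n) NNReal} {B : Matrix (Fin m) (Fin m) NNReal}
    {f : Fin n → Fin m} (h : ∀ p q, A p q ≤ B (f p) (f q)) (k : ℕ) (i j : Fin n) :
    mPow A k i j ≤ mPow B k (f i) (f j) := by
  induction k generalizing j with
  | zero =>
    rw [mPow_zero_apply]
    split_ifs with hij
    · simp [hij, mPow_zero_apply]
    · exact zero_le
  | succ k ih =>
    rw [mPow_succ_apply, mPow_succ_apply]
    refine Finset.sup_le fun p _ => ?_
    exact (mul_le_mul' (ih p) (h p j)).trans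
      (le_sup (f := fun μ => mPow B k (f i) μ * B μ (f j)) (mem_univ (f p)))

lemma mPow_le_klStar_of_lt (B : Matrix (Fin n) (Fin n) NNReal) {k : ℕ} (hk : k < n) (i j : Fin n) :
    mPow B k i j ≤ klStar B i j :=
  le_sup (f := fun k => mPow B k i j) (mem_range.mpr hk)

lemma one_le_klStar_self (B : Matrix (Fin n) (Fin n) NNReal) (i : Fin n) : 1 ≤ klStar B i i := by
  simpa [mPow_zero_apply] using mPow_le_klStar_of_lt B i.pos i i

end Powers

section Walks

variable {ι : Type*}

/-- The weight of the walk that starts at `i` and then visits the vertices of `l` in order;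
it ends at `l.getLastD i`. -/
def walkWeight (B : Matrix ι ι NNReal) : ι → List ι → NNReal
  | _, [] => 1
  | i, p :: l => B i p * walkWeight B p l

@[simp] lemma walkWeight_nil (B : Matrix ι ι NNReal) (i : ι) : walkWeight B i [] = 1 := rfl

@[simp] lemma walkWeight_cons (B : Matrix ι ι NNReal) (i p : ι) (l : List ι) :
    walkWeight B i (p :: l) = B i p * walkWeight B p l := rfl

lemma List.getLastD_append (l₁ l₂ : List ι) (i : ι) :
    (l₁ ++ l₂).getLastD i = l₂.getLastD (l₁.getLastD i) := by
  induction l₁ generalizing i with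
  | nil => rfl
  | cons p l ih => simp only [List.cons_append, List.getLastD_cons, ih]

lemma walkWeight_append (B : Matrix ι ι NNReal) (i : ι) (l₁ l₂ : List ι) :
    walkWeight B i (l₁ ++ l₂) = walkWeight B i l₁ * walkWeight B (l₁.getLastD i) l₂ := by
  induction l₁ generalizing i with
  | nil => simp
  | cons p l ih => simp only [List.cons_append, walkWeight_cons, List.getLastD_cons, ih, mul_assoc]

lemma walkWeight_le_one {B : Matrix ι ι NNReal} (hB : ∀ a b, B a b ≤ 1) (i : ι) (l : List ι) :
    walkWeight B i l ≤ 1 := by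
  induction l generalizing i with
  | nil => exact le_rfl
  | cons p l ih => exact mul_le_one' (hB i p) (ih p)

lemma exists_loop_of_not_nodup {i : ι} {l : List ι} (h : ¬ (i :: l).Nodup) :
    ∃ l₁ l₂ l₃, l = l₁ ++ l₂ ++ l₃ ∧ l₂ ≠ [] ∧ l₂.getLastD (l₁.getLastD i) = l₁.getLastD i := by
  induction l generalizing i with
  | nil => simp at h
  | cons p l ih =>
    by_cases hi : i ∈ p :: l
    · obtain ⟨s, t, hst⟩ := List.append_of_mem hi
      exact ⟨[], s ++ [i], t, by simp [hst], by simp, by simp⟩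
    · rw [List.nodup_cons, not_and_or, not_not] at h
      obtain ⟨l₁, l₂, l₃, rfl, hne, hloop⟩ := ih (h.resolve_left hi)
      exact ⟨p :: l₁, l₂, l₃, rfl, hne, by simpa only [List.getLastD_cons] using hloop⟩

lemma exists_shorter_walk {B : Matrix ι ι NNReal} (hB : ∀ a b, B a b ≤ 1) {i : ι} {l : List ι}
    (h : ¬ (i :: l).Nodup) :
    ∃ l', l'.length < l.length ∧ l'.getLastD i = l.getLastD i ∧
      walkWeight B i l ≤ walkWeight B i l' := by
  obtain ⟨l₁, l₂, l₃, rfl, hne, hloop⟩ := exists_loop_of_not_nodup h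
  refine ⟨l₁ ++ l₃, ?_, ?_, ?_⟩
  · simp [List.length_pos_iff.mpr hne]
  · simp only [List.getLastD_append, hloop]
  · rw [walkWeight_append, walkWeight_append, walkWeight_append, List.getLastD_append, hloop]
    exact mul_le_mul_left (mul_le_of_le_one_right' (walkWeight_le_one hB _ _)) _

end Walks

section KleeneStar

variable {n : ℕ}

lemma walkWeight_le_mPow (B : Matrix (Fin n) (Fin n) NNReal) (i : Fin n) (l : List (Fin n)) :
    walkWeight B i l ≤ mPow B l.length i (l.getLastD i) := by
  induction l using List.reverseRecOn with
  | nil => simp [mPow_zero_apply]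
  | append_singleton l p ih =>
    rw [walkWeight_append, List.length_append, List.length_singleton, mPow_succ_apply,
      List.getLastD_concat, walkWeight_cons, walkWeight_nil, mul_one]
    exact (mul_le_mul_left ih _).trans
      (le_sup (f := fun q => mPow B l.length i q * B q p) (mem_univ _))

lemma exists_walk_of_mPow_ne_zero (B : Matrix (Fin n) (Fin n) NNReal) (k : ℕ) (i j : Fin n)
    (h : mPow B k i j ≠ 0) :
    ∃ l : List (Fin n), l.length = k ∧ l.getLastD i = j ∧ mPow B k i j = walkWeight B i l := by
  induction k generalizing j with
  | zero =>
    have hij : i = j := by by_contra hij; simp [mPow_zero_apply, hij] at h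
    exact ⟨[], rfl, hij, by simp [hij, mPow_zero_apply]⟩
  | succ k ih =>
    obtain ⟨p, -, hp⟩ := exists_mem_eq_sup univ ⟨i, mem_univ i⟩
      fun q => mPow B k i q * B q j
    rw [mPow_succ_apply, hp] at h ⊢
    obtain ⟨l, hlen, hend, hwt⟩ := ih p (left_ne_zero_of_mul h)
    refine ⟨l ++ [j], by simp [hlen], List.getLastD_concat, ?_⟩
    rw [walkWeight_append, hend, hwt, walkWeight_cons, walkWeight_nil, mul_one]

lemma walkWeight_le_klStar {B : Matrix (Fin n) (Fin n) NNReal} (hB : ∀ a b, B a b ≤ 1)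
    (i : Fin n) (l : List (Fin n)) : walkWeight B i l ≤ klStar B i (l.getLastD i) := by
  induction hlen : l.length using Nat.strong_induction_on generalizing l with
  | _ k ih =>
    by_cases hk : k < n
    · exact (walkWeight_le_mPow B i l).trans (hlen ▸ mPow_le_klStar_of_lt B hk i _)
    · have hdup : ¬ (i :: l).Nodup := fun hnd => by
        have := hnd.length_le_card
        simp only [List.length_cons, Fintype.card_fin] at this
        omega
      obtain ⟨l', hshort, hend, hwt⟩ := exists_shorter_walk hB hdup
      exact hwt.trans (hend ▸ ih _ (hlen ▸ hshort) l' rfl)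

lemma mPow_le_klStar {B : Matrix (Fin n) (Fin n) NNReal} (hB : ∀ a b, B a b ≤ 1) (k : ℕ)
    (i j : Fin n) : mPow B k i j ≤ klStar B i j := by
  by_cases h : mPow B k i j = 0
  · rw [h]; exact zero_le
  · obtain ⟨l, -, rfl, hwt⟩ := exists_walk_of_mPow_ne_zero B k i j h
    exact hwt ▸ walkWeight_le_klStar hB i l

lemma apply_le_klStar {B : Matrix (Fin n) (Fin n) NNReal} (hB : ∀ a b, B a b ≤ 1) (i j : Fin n) :
    B i j ≤ klStar B i j := by
  simpa using walkWeight_le_klStar hB i [j]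

lemma klStar_mul_klStar_le {B : Matrix (Fin n) (Fin n) NNReal} (hB : ∀ a b, B a b ≤ 1)
    (i p j : Fin n) : klStar B i p * klStar B p j ≤ klStar B i j := by
  simp only [klStar, NNReal.finset_sup_mul, NNReal.mul_finset_sup]
  exact Finset.sup_le fun b _ => Finset.sup_le fun a _ =>
    (mPow_mul_mPow_le B a b i p j).trans (mPow_le_klStar hB _ i j)

lemma one_le_klStar_of_reflTransGen {B : Matrix (Fin n) (Fin n) NNReal} (hB : ∀ a b, B a b ≤ 1)
    {R : Fin n → Fin n → Prop} (hR : ∀ a b, R a b → 1 ≤ B a b) {i j : Fin n}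
    (h : Relation.ReflTransGen R i j) : 1 ≤ klStar B i j := by
  induction h with
  | refl => exact one_le_klStar_self B i
  | tail _ hbc ih =>
    calc (1 : NNReal) = 1 * 1 := (one_mul 1).symm
      _ ≤ klStar B i _ * klStar B _ _ :=
          mul_le_mul' ih ((hR _ _ hbc).trans (apply_le_klStar hB _ _))
      _ ≤ klStar B i _ := klStar_mul_klStar_le hB _ _ _

end KleeneStar

section Condensation

variable {n m : ℕ}

/-- The matrix `A^C`, the components being the fibres of `f`. -/
noncomputable def blockMax (A : Matrix (Fin n) (Fin n) NNReal) (f : Fin n → Fin m) :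
    Matrix (Fin m) (Fin m) NNReal :=
  fun μ ν => univ.sup fun i => univ.sup fun j => if f i = μ ∧ f j = ν then A i j else 0

lemma apply_le_blockMax (A : Matrix (Fin n) (Fin n) NNReal) (f : Fin n → Fin m) (p q : Fin n) :
    A p q ≤ blockMax A f (f p) (f q) := by
  refine le_trans ?_ (le_sup (f := fun i => univ.sup fun j =>
    if f i = f p ∧ f j = f q then A i j else 0) (mem_univ p))
  exact le_trans (by simp) (le_sup (f := fun j =>
    if f p = f p ∧ f j = f q then A p j else 0) (mem_univ q))

lemma blockMax_le {A : Matrix (Fin n) (Fin n) NNReal} {c : NNReal} (hA : ∀ a b, A a b ≤ c)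
    (f : Fin n → Fin m) (μ ν : Fin m) : blockMax A f μ ν ≤ c :=
  Finset.sup_le fun i _ => Finset.sup_le fun j _ => by
    split_ifs
    · exact hA i j
    · exact zero_le

lemma exists_eq_blockMax {A : Matrix (Fin n) (Fin n) NNReal} {f : Fin n → Fin m} {μ ν : Fin m}
    (h : blockMax A f μ ν ≠ 0) : ∃ p q, f p = μ ∧ f q = ν ∧ A p q = blockMax A f μ ν := by
  obtain ⟨i, -, -⟩ := Finset.lt_sup_iff.mp (pos_iff_ne_zero.mpr h)
  obtain ⟨p, -, hp⟩ := exists_mem_eq_sup univ ⟨i, mem_univ i⟩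
    fun i => univ.sup fun j => if f i = μ ∧ f j = ν then A i j else 0
  obtain ⟨q, -, hq⟩ := exists_mem_eq_sup univ ⟨i, mem_univ i⟩
    fun j => if f p = μ ∧ f j = ν then A p j else 0
  have hval : blockMax A f μ ν = if f p = μ ∧ f q = ν then A p q else 0 := by
    rw [blockMax, hp, hq]
  by_cases hpq : f p = μ ∧ f q = ν
  · exact ⟨p, q, hpq.1, hpq.2, by rw [hval, if_pos hpq]⟩
  · exact absurd (by rw [hval, if_neg hpq]) h

variable {A : Matrix (Fin n) (Fin n) NNReal} {f : Fin n → Fin m}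

/-- The last edge of a walk in `A^C` is realised by an edge `p → q` of `A`, and `q` reaches `j`
inside its block at weight `1`. -/
lemma mPow_blockMax_le_klStar (hA : ∀ a b, A a b ≤ 1)
    (hconn : ∀ i j, f i = f j → 1 ≤ klStar A i j) (k : ℕ) (i j : Fin n) :
    mPow (blockMax A f) k (f i) (f j) ≤ klStar A i j := by
  induction k generalizing j with
  | zero =>
    rw [mPow_zero_apply]
    split_ifs with hij
    · exact hconn i j hij
    · exact zero_le
  | succ k ih =>
    rw [mPow_succ_apply]
    refine Finset.sup_le fun κ _ => ?_
    by_cases h0 : blockMax A f κ (f j) = 0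
    · rw [h0, mul_zero]; exact zero_le
    obtain ⟨p, q, rfl, hq, hpq⟩ := exists_eq_blockMax h0
    calc mPow (blockMax A f) k (f i) (f p) * blockMax A f (f p) (f j)
        ≤ klStar A i p * (A p q * klStar A q j) := by
          rw [← hpq]
          exact mul_le_mul' (ih p) (le_mul_of_one_le_right' (hconn q j hq))
      _ ≤ klStar A i p * (klStar A p q * klStar A q j) := by
          gcongr; exact apply_le_klStar hA p q
      _ ≤ klStar A i p * klStar A p j := by gcongr; exact klStar_mul_klStar_le hA p q j
      _ ≤ klStar A i j := klStar_mul_klStar_le hA i p j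

theorem klStar_blockMax (hA : ∀ a b, A a b ≤ 1) (hconn : ∀ i j, f i = f j → 1 ≤ klStar A i j)
    (i j : Fin n) : klStar (blockMax A f) (f i) (f j) = klStar A i j :=
  le_antisymm (Finset.sup_le fun k _ => mPow_blockMax_le_klStar hA hconn k i j)
    (Finset.sup_le fun k _ => (mPow_le_mPow_comp (apply_le_blockMax A f) k i j).trans
      (mPow_le_klStar (blockMax_le hA f) k (f i) (f j)))

end Condensation

theorem stmt_18_general {n m : ℕ} (A : Matrix (Fin n) (Fin n) NNReal)
    (hvis : ∀ i j, (criticalEdge A i j → A i j = 1) ∧ A i j ≤ 1)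
    (f : Fin n → Fin m)
    (hscc : ∀ i j, f i = f j ↔
      (Relation.ReflTransGen (criticalEdge A) i j ∧
        Relation.ReflTransGen (criticalEdge A) j i))
    (Ac : Matrix (Fin m) (Fin m) NNReal)
    (hAc : ∀ μ ν, Ac μ ν =
      univ.sup fun i => univ.sup fun j => if f i = μ ∧ f j = ν then A i j else 0) :
    ∀ i j, klStar A i j = klStar Ac (f i) (f j) := by
  have hA : ∀ a b, A a b ≤ 1 := fun a b => (hvis a b).2
  have hconn : ∀ i j, f i = f j → 1 ≤ klStar A i j := fun i j hij =>
    one_le_klStar_of_reflTransGen hA (fun a b hab => ((hvis a b).1 hab).ge) ((hscc i j).1 hij).1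
  have hAc_eq : Ac = blockMax A f := funext₂ hAc
  intro i j
  rw [hAc_eq, klStar_blockMax hA hconn]

/-- for a definite visualized matrix, the Kleene star is constant
on each pair of strongly connected components of `C*(A)`, with value given by
the Kleene star of the reduced `m × m` matrix `A^C`. -/
theorem stmt_18 {n m : ℕ} (A : Matrix (Fin n) (Fin n) NNReal)
    (hdef : maxCycleMean A = 1)
    (hvis : ∀ i j, (criticalEdge A i j → A i j = 1) ∧ A i j ≤ 1)
    (f : Fin n → Fin m) (hf : Function.Surjective f)
    (hscc : ∀ i j, f i = f j ↔
      (Relation.ReflTransGen (criticalEdge A) i j ∧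
        Relation.ReflTransGen (criticalEdge A) j i))
    (Ac : Matrix (Fin m) (Fin m) NNReal)
    (hAc : ∀ μ ν, Ac μ ν =
      univ.sup fun i => univ.sup fun j => if f i = μ ∧ f j = ν then A i j else 0) :
    ∀ i j, klStar A i j = klStar Ac (f i) (f j) :=
  stmt_18_general A hvis f hscc Ac hAc
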